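/- arXiv:1508.01129 — 2 statements merged into one kernel-verified Lean document; each statement's English description precedes it below -/
import Mathlib

section
/- If G is a d-regular graph (d ≥ 1), then G admits an edge coloring with colors {1,2} such that adjacent vertices have distinct weighted degrees (sums of incident colors) if and only if the edge set of G can be partitioned into two sets each inducing a locally irregular subgraph (a graph in which adjacent vertices have distinct degrees). -/
/-- A graph is locally irregular if adjacent vertices have distinct degrees. -/
def LocallyIrregular {V : Type*} (H : SimpleGraph V) : Prop :=
  ∀ u v : V, H.Adj u v → (H.neighborSet u).ncard ≠ (H.neighborSet v).ncard

/-!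
A colouring `c : E(G) → {1,2}` is the same thing as the subgraph `H ≤ G` of edges coloured `2`,
and the weighted degree of `u` is then `deg_G u + deg_H u`. In a `d`-regular graph the colouring
thus distinguishes neighbours iff `deg_H` does, and since `deg_{G \ H} = d - deg_H` this says
exactly that both `H` and `G \ H` are locally irregular.
-/

open Finset

namespace SimpleGraph

variable {V : Type*} {G H : SimpleGraph V}

lemma ncard_neighborSet_eq_degree [Fintype V] [DecidableRel G.Adj] (u : V) :
    (G.neighborSet u).ncard = G.degree u := by
  rw [← Nat.card_coe_set_eq, Nat.card_eq_fintype_card, card_neighborSet_eq_degree]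

lemma ncard_neighborSet_sdiff_add_ncard [Finite V] (hHG : H ≤ G) (u : V) :
    ((G \ H).neighborSet u).ncard + (H.neighborSet u).ncard = (G.neighborSet u).ncard := by
  rw [neighborSet_sdiff]
  exact Set.ncard_sdiff_add_ncard_of_subset (fun _ h ↦ hHG h)

lemma sum_neighborFinset_eq_ncard_add_ncard [Fintype V] [DecidableRel G.Adj]
    [DecidablePred (· ∈ H.edgeSet)] (hHG : H ≤ G) {c : Sym2 V → ℕ}
    (hc : ∀ e ∈ G.edgeSet, c e = if e ∈ H.edgeSet then 2 else 1) (u : V) :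
    ∑ w ∈ G.neighborFinset u, c s(u, w) =
      (G.neighborSet u).ncard + (H.neighborSet u).ncard := by
  classical
  have hH : H.neighborSet u = ↑{w ∈ G.neighborFinset u | H.Adj u w} := by
    ext w
    simpa using fun h : H.Adj u w ↦ hHG h
  calc ∑ w ∈ G.neighborFinset u, c s(u, w)
      = ∑ w ∈ G.neighborFinset u, (1 + if H.Adj u w then 1 else 0) := by
        refine sum_congr rfl fun w hw ↦ ?_
        rw [hc _ ((mem_neighborFinset ..).1 hw)]
        by_cases h : H.Adj u w <;> simp [h]
    _ = (G.neighborSet u).ncard + (H.neighborSet u).ncard := by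
        rw [sum_add_distrib, sum_boole, hH, Set.ncard_coe_finset, ncard_neighborSet_eq_degree]
        simp

variable [Fintype V] [DecidableRel G.Adj] {d : ℕ}

lemma IsRegularOfDegree.locallyIrregular_sdiff_and_iff (hreg : G.IsRegularOfDegree d)
    (hHG : H ≤ G) :
    LocallyIrregular (G \ H) ∧ LocallyIrregular H ↔
      ∀ u v, G.Adj u v → (H.neighborSet u).ncard ≠ (H.neighborSet v).ncard := by
  have hdeg (u : V) : ((G \ H).neighborSet u).ncard + (H.neighborSet u).ncard = d := by
    rw [ncard_neighborSet_sdiff_add_ncard hHG, ncard_neighborSet_eq_degree, hreg u]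
  constructor
  · rintro ⟨hsdiff, hH⟩ u v huv
    by_cases h : H.Adj u v
    · exact hH u v h
    · have := hsdiff u v ⟨huv, h⟩
      have := hdeg u
      have := hdeg v
      omega
  · refine fun h ↦ ⟨fun u v huv ↦ ?_, fun u v huv ↦ h u v (hHG huv)⟩
    have := h u v huv.1
    have := hdeg u
    have := hdeg v
    omega

lemma IsRegularOfDegree.sum_ne_iff_locallyIrregular (hreg : G.IsRegularOfDegree d)
    [DecidablePred (· ∈ H.edgeSet)] (hHG : H ≤ G) {c : Sym2 V → ℕ}
    (hc : ∀ e ∈ G.edgeSet, c e = if e ∈ H.edgeSet then 2 else 1) :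
    (∀ u v, G.Adj u v →
        ∑ w ∈ G.neighborFinset u, c s(u, w) ≠ ∑ w ∈ G.neighborFinset v, c s(v, w)) ↔
      LocallyIrregular (G \ H) ∧ LocallyIrregular H := by
  simp only [hreg.locallyIrregular_sdiff_and_iff hHG, sum_neighborFinset_eq_ncard_add_ncard hHG hc,
    ncard_neighborSet_eq_degree, hreg.degree_eq, ne_eq, add_right_inj]

end SimpleGraph

open SimpleGraph in
theorem stmt_0_general {V : Type*} [Fintype V] (G : SimpleGraph V) [DecidableRel G.Adj]
    (d : ℕ) (hreg : G.IsRegularOfDegree d) :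
    (∃ c : Sym2 V → ℕ, (∀ e ∈ G.edgeSet, c e = 1 ∨ c e = 2) ∧
      ∀ u v : V, G.Adj u v →
        (∑ w ∈ G.neighborFinset u, c s(u, w)) ≠ (∑ w ∈ G.neighborFinset v, c s(v, w))) ↔
    (∃ H₁ H₂ : SimpleGraph V, H₁.edgeSet ∪ H₂.edgeSet = G.edgeSet ∧
      Disjoint H₁.edgeSet H₂.edgeSet ∧ LocallyIrregular H₁ ∧ LocallyIrregular H₂) := by
  classical
  constructor
  · rintro ⟨c, hc, hne⟩
    let H := G.deleteEdges {e | c e ≠ 2}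
    have hHG : H ≤ G := G.deleteEdges_le _
    have hcH : ∀ e ∈ G.edgeSet, c e = if e ∈ H.edgeSet then 2 else 1 := fun e he ↦ by
      rcases hc e he with h | h <;> simp [H, he, h]
    obtain ⟨h₁, h₂⟩ := (hreg.sum_ne_iff_locallyIrregular hHG hcH).1 hne
    exact ⟨G \ H, H, by rw [← edgeSet_sup, sdiff_sup_cancel hHG],
      disjoint_edgeSet.2 disjoint_sdiff_self_left, h₁, h₂⟩
  · rintro ⟨H₁, H₂, hU, hD, h₁, h₂⟩
    have hU : H₁ ⊔ H₂ = G := edgeSet_injective (by rw [edgeSet_sup, hU])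
    have hHG : H₂ ≤ G := hU ▸ le_sup_right
    obtain rfl : H₁ = G \ H₂ := by
      rw [← hU, sup_sdiff_right_self, (disjoint_edgeSet.1 hD).sdiff_eq_left]
    refine ⟨fun e ↦ if e ∈ H₂.edgeSet then 2 else 1,
      fun e _ ↦ by by_cases h : e ∈ H₂.edgeSet <;> simp [h], ?_⟩
    exact (hreg.sum_ne_iff_locallyIrregular hHG fun _ _ ↦ rfl).2 ⟨h₁, h₂⟩

theorem stmt_0 {V : Type*} [Fintype V] (G : SimpleGraph V) [DecidableRel G.Adj]
    (d : ℕ) (hd : 1 ≤ d) (hreg : G.IsRegularOfDegree d) :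
    (∃ c : Sym2 V → ℕ, (∀ e ∈ G.edgeSet, c e = 1 ∨ c e = 2) ∧
      ∀ u v : V, G.Adj u v →
        (∑ w ∈ G.neighborFinset u, c s(u, w)) ≠ (∑ w ∈ G.neighborFinset v, c s(v, w))) ↔
    (∃ H₁ H₂ : SimpleGraph V, H₁.edgeSet ∪ H₂.edgeSet = G.edgeSet ∧
      Disjoint H₁.edgeSet H₂.edgeSet ∧ LocallyIrregular H₁ ∧ LocallyIrregular H₂) :=
  stmt_0_general G d hreg
end

section
/- Suppose that for a graph G = (V,E) the following degree theorem holds: whenever for every vertex v one chooses integers a⁻_v ∈ [d(v)/3 − 1, d(v)/2] and a⁺_v ∈ [d(v)/2 − 1, 2d(v)/3], there exists a spanning subgraph H of G with d_H(v) ∈ {a⁻_v, a⁻_v+1, a⁺_v, a⁺_v+1} for every v. Then for any choice of positive integers λ_v with 6λ_v ≤ d(v) for all v, and any assignment t : V → ℤ, there exists a spanning subgraph H of G such that for every vertex v, d_H(v) ∈ [d(v)/3, 2d(v)/3] and d_H(v) ≡ t(v) (mod λ_v) or d_H(v) ≡ t(v)+1 (mod λ_v). -/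
private lemma stmt3_mod (m l s : ℤ) : m - (m - s) % l ≡ s [ZMOD l] := by
  have h1 : (m - s) % l ≡ m - s [ZMOD l] := Int.emod_emod_of_dvd _ dvd_rfl
  have h2 : m - (m - s) % l ≡ m - (m - s) [ZMOD l] := (Int.ModEq.refl m).sub h1
  simpa using h2

theorem stmt_3 {V : Type*} [Fintype V] (G : SimpleGraph V) [DecidableRel G.Adj]
    (hyp : ∀ aminus aplus : V → ℤ,
      (∀ v : V, ((G.degree v : ℚ) / 3 - 1 ≤ (aminus v : ℚ) ∧ (aminus v : ℚ) ≤ (G.degree v : ℚ) / 2) ∧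
        ((G.degree v : ℚ) / 2 - 1 ≤ (aplus v : ℚ) ∧ (aplus v : ℚ) ≤ 2 * (G.degree v : ℚ) / 3)) →
      ∃ H : SimpleGraph V, H ≤ G ∧ ∀ v : V,
        ((H.neighborSet v).ncard : ℤ) = aminus v ∨ ((H.neighborSet v).ncard : ℤ) = aminus v + 1 ∨
        ((H.neighborSet v).ncard : ℤ) = aplus v ∨ ((H.neighborSet v).ncard : ℤ) = aplus v + 1) :
    ∀ lam : V → ℕ, (∀ v, 0 < lam v ∧ 6 * lam v ≤ G.degree v) →
    ∀ t : V → ℤ, ∃ H : SimpleGraph V, H ≤ G ∧ ∀ v : V,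
      ((G.degree v : ℚ) / 3 ≤ ((H.neighborSet v).ncard : ℚ) ∧
       ((H.neighborSet v).ncard : ℚ) ≤ 2 * (G.degree v : ℚ) / 3) ∧
      (((H.neighborSet v).ncard : ℤ) ≡ t v [ZMOD (lam v : ℤ)] ∨
       ((H.neighborSet v).ncard : ℤ) ≡ t v + 1 [ZMOD (lam v : ℤ)]) := by
  intro lam hlam t
  -- choices
  let am : V → ℤ := fun v =>
    (G.degree v : ℤ) / 2 - ((G.degree v : ℤ) / 2 - t v) % (lam v : ℤ)
  let ap : V → ℤ := fun v =>
    (2 * (G.degree v : ℤ) / 3 - 1) - ((2 * (G.degree v : ℤ) / 3 - 1) - t v) % (lam v : ℤ)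
  -- integer bounds
  have key : ∀ v : V,
      2 * (G.degree v : ℤ) - 6 ≤ 6 * am v ∧ 2 * am v ≤ (G.degree v : ℤ) ∧
      2 * (G.degree v : ℤ) + 3 ≤ 6 * am v ∧ 3 * (am v + 1) ≤ 2 * (G.degree v : ℤ) ∧
      3 * (G.degree v : ℤ) - 6 ≤ 6 * ap v ∧ 3 * ap v ≤ 2 * (G.degree v : ℤ) ∧
      2 * (G.degree v : ℤ) ≤ 6 * ap v ∧ 3 * (ap v + 1) ≤ 2 * (G.degree v : ℤ) := by
    intro v
    have hl : (1 : ℤ) ≤ (lam v : ℤ) := by exact_mod_cast (hlam v).1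
    have hd : 6 * (lam v : ℤ) ≤ (G.degree v : ℤ) := by exact_mod_cast (hlam v).2
    have hr1 : 0 ≤ ((G.degree v : ℤ) / 2 - t v) % (lam v : ℤ) :=
      Int.emod_nonneg _ (by omega)
    have hr2 : ((G.degree v : ℤ) / 2 - t v) % (lam v : ℤ) < (lam v : ℤ) :=
      Int.emod_lt_of_pos _ (by omega)
    have hs1 : 0 ≤ ((2 * (G.degree v : ℤ) / 3 - 1) - t v) % (lam v : ℤ) :=
      Int.emod_nonneg _ (by omega)
    have hs2 : ((2 * (G.degree v : ℤ) / 3 - 1) - t v) % (lam v : ℤ) < (lam v : ℤ) :=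
      Int.emod_lt_of_pos _ (by omega)
    have hav : am v = (G.degree v : ℤ) / 2 - ((G.degree v : ℤ) / 2 - t v) % (lam v : ℤ) := rfl
    have hpv : ap v = (2 * (G.degree v : ℤ) / 3 - 1)
        - ((2 * (G.degree v : ℤ) / 3 - 1) - t v) % (lam v : ℤ) := rfl
    set r := ((G.degree v : ℤ) / 2 - t v) % (lam v : ℤ)
    set s := ((2 * (G.degree v : ℤ) / 3 - 1) - t v) % (lam v : ℤ)
    have he : 2 * ((G.degree v : ℤ) / 2) ≤ (G.degree v : ℤ) ∧
        (G.degree v : ℤ) ≤ 2 * ((G.degree v : ℤ) / 2) + 1 := by omega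
    have hf : 3 * (2 * (G.degree v : ℤ) / 3) ≤ 2 * (G.degree v : ℤ) ∧
        2 * (G.degree v : ℤ) ≤ 3 * (2 * (G.degree v : ℤ) / 3) + 2 := by omega
    omega
  -- congruences
  have hmodm : ∀ v : V, am v ≡ t v [ZMOD (lam v : ℤ)] := fun v => stmt3_mod _ _ _
  have hmodp : ∀ v : V, ap v ≡ t v [ZMOD (lam v : ℤ)] := fun v => stmt3_mod _ _ _
  obtain ⟨H, hHG, hH⟩ := hyp am ap (by
    intro v
    obtain ⟨k1, k2, k3, k4, k5, k6, k7, k8⟩ := key v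
    have q1 : 2 * (G.degree v : ℚ) - 6 ≤ 6 * (am v : ℚ) := by exact_mod_cast k1
    have q2 : 2 * (am v : ℚ) ≤ (G.degree v : ℚ) := by exact_mod_cast k2
    have q5 : 3 * (G.degree v : ℚ) - 6 ≤ 6 * (ap v : ℚ) := by exact_mod_cast k5
    have q6 : 3 * (ap v : ℚ) ≤ 2 * (G.degree v : ℚ) := by exact_mod_cast k6
    exact ⟨⟨by linarith, by linarith⟩, ⟨by linarith, by linarith⟩⟩)
  refine ⟨H, hHG, fun v => ?_⟩
  obtain ⟨k1, k2, k3, k4, k5, k6, k7, k8⟩ := key v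
  rcases hH v with h | h | h | h <;>
  · constructor
    · have hq : (((H.neighborSet v).ncard : ℤ) : ℚ) = ((H.neighborSet v).ncard : ℚ) := by
        push_cast; ring
      constructor
      · rw [← hq, h]
        push_cast
        have : (G.degree v : ℚ) ≤ 3 * ((am v : ℚ)) ∨ True := Or.inr trivial
        first
          | (have qq : 2 * (G.degree v : ℚ) + 3 ≤ 6 * (am v : ℚ) := by exact_mod_cast k3
             linarith)
          | (have qq : 2 * (G.degree v : ℚ) ≤ 6 * (ap v : ℚ) := by exact_mod_cast k7
             linarith)
      · rw [← hq, h]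
        push_cast
        first
          | (have qq : 3 * ((am v : ℚ) + 1) ≤ 2 * (G.degree v : ℚ) := by exact_mod_cast k4
             linarith)
          | (have qq : 3 * ((ap v : ℚ) + 1) ≤ 2 * (G.degree v : ℚ) := by exact_mod_cast k8
             linarith)
    · rw [h]
      first
        | exact Or.inl (hmodm v)
        | exact Or.inl (hmodp v)
        | exact Or.inr ((hmodm v).add_right 1)
        | exact Or.inr ((hmodp v).add_right 1)
end
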